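/- Let H ∈ H⁴(T²) be strictly positive and satisfy H_θ + γ·div_ℓ(H³ ∇_ℓ(Δ_ℓ H + H)) = 0 weakly on T² with γ > 0. Then ∇_ℓ(Δ_ℓ H + H) = 0 almost everywhere on T², and consequently H_θ = 0. -/

import Mathlib

/-- Partial derivative in the first (angular) variable. -/
noncomputable def pdθ (f : ℝ → ℝ → ℝ) : ℝ → ℝ → ℝ := fun θ ζ => deriv (fun x => f x ζ) θ

/-- Partial derivative in the second (axial) variable. -/
noncomputable def pdζ (f : ℝ → ℝ → ℝ) : ℝ → ℝ → ℝ := fun θ ζ => deriv (fun y => f θ y) ζ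

/-- The rescaled Laplacian `Δ_ℓ f = f_θθ + (π²/ℓ²) f_ζζ`. -/
noncomputable def laplℓ (ℓ : ℝ) (f : ℝ → ℝ → ℝ) : ℝ → ℝ → ℝ :=
  fun θ ζ => pdθ (pdθ f) θ ζ + Real.pi ^ 2 / ℓ ^ 2 * pdζ (pdζ f) θ ζ

/-!
Multiply the equation by `u = Δ_ℓ H + H`. Both `u H_θ` and `u div_ℓ(H³ ∇_ℓ u) + H³ |∇_ℓ u|²` are
divergences of explicit fields built from `H` and `u`, so pointwise
`div (energy flux) = u · (equation) + γ H³ |∇_ℓ u|²`.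
Integrating over the period square, the divergence and the equation contribute nothing, hence
`∫∫ γ H³ |∇_ℓ u|² = 0`. The integrand is continuous, nonnegative and periodic, so it vanishes, and
`H > 0` gives `∇_ℓ u = 0`. Then the flux `H³ ∇_ℓ u` vanishes identically and the equation reduces
to `H_θ = 0`.
-/

open Function Set MeasureTheory

section PartialDerivatives

variable {f : ℝ → ℝ → ℝ} {θ ζ : ℝ}

theorem hasDerivAt_fderiv_apply_θ (hf : DifferentiableAt ℝ (uncurry f) (θ, ζ)) :
    HasDerivAt (fun x => f x ζ) (fderiv ℝ (uncurry f) (θ, ζ) (1, 0)) θ := by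
  have h := hf.hasFDerivAt.comp_hasDerivAt θ ((hasDerivAt_id θ).prodMk (hasDerivAt_const θ ζ))
  exact h

theorem hasDerivAt_fderiv_apply_ζ (hf : DifferentiableAt ℝ (uncurry f) (θ, ζ)) :
    HasDerivAt (fun y => f θ y) (fderiv ℝ (uncurry f) (θ, ζ) (0, 1)) ζ := by
  have h := hf.hasFDerivAt.comp_hasDerivAt ζ ((hasDerivAt_const ζ θ).prodMk (hasDerivAt_id ζ))
  exact h

theorem pdθ_eq_fderiv (hf : DifferentiableAt ℝ (uncurry f) (θ, ζ)) :
    pdθ f θ ζ = fderiv ℝ (uncurry f) (θ, ζ) (1, 0) :=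
  (hasDerivAt_fderiv_apply_θ hf).deriv

theorem pdζ_eq_fderiv (hf : DifferentiableAt ℝ (uncurry f) (θ, ζ)) :
    pdζ f θ ζ = fderiv ℝ (uncurry f) (θ, ζ) (0, 1) :=
  (hasDerivAt_fderiv_apply_ζ hf).deriv

theorem hasDerivAt_pdθ (hf : DifferentiableAt ℝ (uncurry f) (θ, ζ)) :
    HasDerivAt (fun x => f x ζ) (pdθ f θ ζ) θ :=
  (hasDerivAt_fderiv_apply_θ hf).differentiableAt.hasDerivAt

theorem hasDerivAt_pdζ (hf : DifferentiableAt ℝ (uncurry f) (θ, ζ)) :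
    HasDerivAt (fun y => f θ y) (pdζ f θ ζ) ζ :=
  (hasDerivAt_fderiv_apply_ζ hf).differentiableAt.hasDerivAt

theorem uncurry_pdθ (hf : Differentiable ℝ (uncurry f)) :
    uncurry (pdθ f) = fun p => fderiv ℝ (uncurry f) p (1, 0) :=
  funext fun p => pdθ_eq_fderiv (hf p)

theorem uncurry_pdζ (hf : Differentiable ℝ (uncurry f)) :
    uncurry (pdζ f) = fun p => fderiv ℝ (uncurry f) p (0, 1) :=
  funext fun p => pdζ_eq_fderiv (hf p)

variable {m n : WithTop ℕ∞}

theorem ContDiff.pdθ (hf : ContDiff ℝ n (uncurry f)) (hmn : m + 1 ≤ n) :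
    ContDiff ℝ m (uncurry (pdθ f)) := by
  rw [uncurry_pdθ (hf.differentiable (by rintro rfl; simp at hmn))]
  exact (hf.fderiv_right hmn).clm_apply contDiff_const

theorem ContDiff.pdζ (hf : ContDiff ℝ n (uncurry f)) (hmn : m + 1 ≤ n) :
    ContDiff ℝ m (uncurry (pdζ f)) := by
  rw [uncurry_pdζ (hf.differentiable (by rintro rfl; simp at hmn))]
  exact (hf.fderiv_right hmn).clm_apply contDiff_const

theorem ContDiff.laplℓ (ℓ : ℝ) (hf : ContDiff ℝ n (uncurry f)) (hmn : m + 2 ≤ n) :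
    ContDiff ℝ m (uncurry (laplℓ ℓ f)) := by
  have hmn' : m + 1 + 1 ≤ n := by rwa [add_assoc, one_add_one_eq_two]
  exact ((hf.pdθ hmn').pdθ le_rfl).add (contDiff_const.mul ((hf.pdζ hmn').pdζ le_rfl))

theorem pdζ_pdθ_comm (hf : ContDiff ℝ 2 (uncurry f)) : pdζ (pdθ f) = pdθ (pdζ f) := by
  have hd : Differentiable ℝ (uncurry f) := hf.differentiable two_ne_zero
  have hd' : Differentiable ℝ (fderiv ℝ (uncurry f)) :=
    (hf.fderiv_right (m := 1) (by norm_num)).differentiable one_ne_zero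
  funext θ ζ
  rw [pdζ_eq_fderiv ((hf.pdθ (m := 1) (by norm_num)).differentiable one_ne_zero _),
    pdθ_eq_fderiv ((hf.pdζ (m := 1) (by norm_num)).differentiable one_ne_zero _),
    uncurry_pdθ hd, uncurry_pdζ hd, fderiv_clm_apply (hd' _) (differentiableAt_const _),
    fderiv_clm_apply (hd' _) (differentiableAt_const _)]
  simpa using hf.contDiffAt.isSymmSndFDerivAt (by simp) (0, 1) (1, 0)

end PartialDerivatives

theorem Function.Periodic.deriv {g : ℝ → ℝ} {T : ℝ} (h : Periodic g T) :
    Periodic (deriv g) T := fun x => by rw [← deriv_comp_add_const, h.funext]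

structure DoublyPeriodic (f : ℝ → ℝ → ℝ) (T : ℝ) : Prop where
  left : ∀ θ ζ, f (θ + T) ζ = f θ ζ
  right : ∀ θ ζ, f θ (ζ + T) = f θ ζ

namespace DoublyPeriodic

variable {f : ℝ → ℝ → ℝ} {T : ℝ}

theorem pdθ (h : DoublyPeriodic f T) : DoublyPeriodic (pdθ f) T where
  left θ ζ := Periodic.deriv (fun x => h.left x ζ) θ
  right θ ζ := by simp only [_root_.pdθ, h.right]

theorem pdζ (h : DoublyPeriodic f T) : DoublyPeriodic (pdζ f) T where
  left θ ζ := by simp only [_root_.pdζ, h.left]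
  right θ ζ := Periodic.deriv (h.right θ) ζ

theorem laplℓ (ℓ : ℝ) (h : DoublyPeriodic f T) : DoublyPeriodic (laplℓ ℓ f) T where
  left θ ζ := by simp only [_root_.laplℓ, h.pdθ.pdθ.left, h.pdζ.pdζ.left]
  right θ ζ := by simp only [_root_.laplℓ, h.pdθ.pdθ.right, h.pdζ.pdζ.right]

end DoublyPeriodic

section TorusIntegrals

variable {T : ℝ}

theorem Function.Periodic.intervalIntegral_deriv_eq_zero {g : ℝ → ℝ} (hg : ContDiff ℝ 1 g)
    (h : Periodic g T) : ∫ x in 0..T, _root_.deriv g x = 0 := by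
  rw [intervalIntegral.integral_deriv_eq_sub (fun x _ => hg.differentiable one_ne_zero x)
    ((hg.continuous_deriv le_rfl).intervalIntegrable _ _), ← zero_add T, h, sub_self]

theorem integral_integral_pdθ_add_pdζ_eq_zero {Φ Ψ : ℝ → ℝ → ℝ}
    (hΦ : ContDiff ℝ 1 (uncurry Φ)) (hΨ : ContDiff ℝ 1 (uncurry Ψ))
    (hΦT : ∀ ζ, Periodic (Φ · ζ) T) (hΨT : ∀ θ, Periodic (Ψ θ) T) :
    ∫ ζ in 0..T, ∫ θ in 0..T, (pdθ Φ θ ζ + pdζ Ψ θ ζ) = 0 := by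
  have hΦ' : Continuous (uncurry (pdθ Φ)) := (hΦ.pdθ (zero_add 1).le).continuous
  have hΨ' : Continuous (uncurry (pdζ Ψ)) := (hΨ.pdζ (zero_add 1).le).continuous
  calc ∫ ζ in 0..T, ∫ θ in 0..T, (pdθ Φ θ ζ + pdζ Ψ θ ζ)
      = ∫ ζ in 0..T, ∫ θ in 0..T, pdζ Ψ θ ζ := by
        refine intervalIntegral.integral_congr fun ζ _ => ?_
        have hcont : Continuous fun θ : ℝ => (θ, ζ) := continuous_id.prodMk continuous_const
        have hΦζ : ∫ θ in 0..T, pdθ Φ θ ζ = 0 :=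
          (hΦT ζ).intervalIntegral_deriv_eq_zero (hΦ.comp (contDiff_id.prodMk contDiff_const))
        rw [intervalIntegral.integral_add (f := (pdθ Φ · ζ)) (g := (pdζ Ψ · ζ))
          ((hΦ'.comp hcont).intervalIntegrable _ _) ((hΨ'.comp hcont).intervalIntegrable _ _),
          hΦζ, zero_add]
    _ = ∫ θ in 0..T, ∫ ζ in 0..T, pdζ Ψ θ ζ :=
        intervalIntegral_intervalIntegral_swap (F := fun ζ θ => pdζ Ψ θ ζ)
          (((hΨ'.comp continuous_swap).continuousOn.integrableOn_compact
            (isCompact_uIcc.prod isCompact_uIcc)).mono_set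
            (prod_mono uIoc_subset_uIcc uIoc_subset_uIcc))
    _ = 0 := by
        refine (intervalIntegral.integral_congr (g := fun _ => 0) fun θ _ => ?_).trans
          intervalIntegral.integral_zero
        exact (hΨT θ).intervalIntegral_deriv_eq_zero
          (hΨ.comp (contDiff_const.prodMk contDiff_id))

theorem Function.Periodic.eq_zero_of_intervalIntegral_eq_zero {g : ℝ → ℝ} (hT : 0 < T)
    (hg : Continuous g) (hg0 : ∀ x, 0 ≤ g x) (h : Periodic g T)
    (hint : ∫ x in 0..T, g x = 0) (x : ℝ) : g x = 0 := by
  obtain ⟨y, hy, hxy⟩ := h.exists_mem_Ico₀ hT x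
  rw [hxy]
  refine le_antisymm (not_lt.1 fun hpos => hint.not_gt ?_) (hg0 y)
  exact intervalIntegral.integral_pos hT hg.continuousOn (fun x _ => hg0 x)
    ⟨y, Ico_subset_Icc_self hy, hpos⟩

theorem DoublyPeriodic.eq_zero_of_integral_integral_eq_zero {R : ℝ → ℝ → ℝ} (hT : 0 < T)
    (hR : Continuous (uncurry R)) (hR0 : ∀ θ ζ, 0 ≤ R θ ζ) (h : DoublyPeriodic R T)
    (hint : ∫ ζ in 0..T, ∫ θ in 0..T, R θ ζ = 0) (θ ζ : ℝ) : R θ ζ = 0 := by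
  have hRζ : Continuous (R · ζ) := hR.comp (continuous_id.prodMk continuous_const)
  refine Periodic.eq_zero_of_intervalIntegral_eq_zero hT hRζ (hR0 · ζ) (h.left · ζ) ?_ θ
  refine Periodic.eq_zero_of_intervalIntegral_eq_zero (g := fun ζ => ∫ θ in 0..T, R θ ζ) hT
    ?_ (fun ζ => intervalIntegral.integral_nonneg hT.le fun θ _ => hR0 θ ζ)
    (fun ζ => by simp only [h.right]) hint ζ
  exact intervalIntegral.continuous_parametric_intervalIntegral_of_continuous'
    (f := fun ζ θ => R θ ζ) (hR.comp continuous_swap) 0 T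

end TorusIntegrals

section RimmingFlow

variable {ℓ γ : ℝ} {H : ℝ → ℝ → ℝ}

noncomputable def fluxθ (ℓ : ℝ) (H : ℝ → ℝ → ℝ) : ℝ → ℝ → ℝ :=
  fun x y => H x y ^ 3 * pdθ (laplℓ ℓ H + H) x y

noncomputable def fluxζ (ℓ : ℝ) (H : ℝ → ℝ → ℝ) : ℝ → ℝ → ℝ :=
  fun x y => H x y ^ 3 * (Real.pi / ℓ * pdζ (laplℓ ℓ H + H) x y)

-- `u H_θ = ∂_θ((H_θ² + H² - (π/ℓ)² H_ζ²) / 2) + ∂_ζ((π/ℓ)² H_θ H_ζ)` for `u = Δ_ℓ H + H`, and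
-- `u div_ℓ F = div_ℓ (u F) - F · ∇_ℓ u`, where `γ F · ∇_ℓ u` is the dissipation for `F = H³ ∇_ℓ u`.
noncomputable def energyFluxθ (ℓ γ : ℝ) (H : ℝ → ℝ → ℝ) : ℝ → ℝ → ℝ := fun x y =>
  (pdθ H x y ^ 2 + H x y ^ 2 - Real.pi ^ 2 / ℓ ^ 2 * pdζ H x y ^ 2) / 2 +
    γ * ((laplℓ ℓ H + H) x y * fluxθ ℓ H x y)

noncomputable def energyFluxζ (ℓ γ : ℝ) (H : ℝ → ℝ → ℝ) : ℝ → ℝ → ℝ := fun x y =>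
  Real.pi ^ 2 / ℓ ^ 2 * (pdθ H x y * pdζ H x y) +
    γ * (Real.pi / ℓ) * ((laplℓ ℓ H + H) x y * fluxζ ℓ H x y)

noncomputable def dissipation (ℓ γ : ℝ) (H : ℝ → ℝ → ℝ) : ℝ → ℝ → ℝ := fun x y =>
  γ * H x y ^ 3 *
    (pdθ (laplℓ ℓ H + H) x y ^ 2 + Real.pi ^ 2 / ℓ ^ 2 * pdζ (laplℓ ℓ H + H) x y ^ 2)

theorem contDiff_laplℓ_add_self (hH : ContDiff ℝ 4 (uncurry H)) :
    ContDiff ℝ 2 (uncurry (laplℓ ℓ H + H)) :=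
  (hH.laplℓ ℓ (by norm_num)).add (hH.of_le (by norm_num))

theorem contDiff_fluxθ (hH : ContDiff ℝ 4 (uncurry H)) : ContDiff ℝ 1 (uncurry (fluxθ ℓ H)) :=
  ((hH.of_le (by norm_num)).pow 3).mul ((contDiff_laplℓ_add_self hH).pdθ (by norm_num))

theorem contDiff_fluxζ (hH : ContDiff ℝ 4 (uncurry H)) : ContDiff ℝ 1 (uncurry (fluxζ ℓ H)) :=
  ((hH.of_le (by norm_num)).pow 3).mul
    (contDiff_const.mul ((contDiff_laplℓ_add_self hH).pdζ (by norm_num)))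

theorem contDiff_energyFluxθ (hH : ContDiff ℝ 4 (uncurry H)) :
    ContDiff ℝ 1 (uncurry (energyFluxθ ℓ γ H)) :=
  ((((hH.pdθ (by norm_num)).pow 2).add ((hH.of_le (by norm_num)).pow 2)).sub
    (contDiff_const.mul ((hH.pdζ (by norm_num)).pow 2))).div_const 2 |>.add
    (contDiff_const.mul (((contDiff_laplℓ_add_self hH).of_le (by norm_num)).mul
      (contDiff_fluxθ hH)))

theorem contDiff_energyFluxζ (hH : ContDiff ℝ 4 (uncurry H)) :
    ContDiff ℝ 1 (uncurry (energyFluxζ ℓ γ H)) :=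
  (contDiff_const.mul ((hH.pdθ (by norm_num)).mul (hH.pdζ (by norm_num)))).add
    (contDiff_const.mul (((contDiff_laplℓ_add_self hH).of_le (by norm_num)).mul
      (contDiff_fluxζ hH)))

theorem continuous_dissipation (hH : ContDiff ℝ 4 (uncurry H)) :
    Continuous (uncurry (dissipation ℓ γ H)) :=
  (continuous_const.mul (hH.continuous.pow 3)).mul
    ((((contDiff_laplℓ_add_self hH).pdθ (m := 1) (by norm_num)).continuous.pow 2).add
      (continuous_const.mul
        (((contDiff_laplℓ_add_self hH).pdζ (m := 1) (by norm_num)).continuous.pow 2)))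

theorem pdθ_energyFluxθ_add_pdζ_energyFluxζ (hH : ContDiff ℝ 4 (uncurry H)) (θ ζ : ℝ) :
    pdθ (energyFluxθ ℓ γ H) θ ζ + pdζ (energyFluxζ ℓ γ H) θ ζ =
      (laplℓ ℓ H + H) θ ζ *
          (pdθ H θ ζ + γ * (pdθ (fluxθ ℓ H) θ ζ + Real.pi / ℓ * pdζ (fluxζ ℓ H) θ ζ)) +
        dissipation ℓ γ H θ ζ := by
  have hu := (contDiff_laplℓ_add_self (ℓ := ℓ) hH).differentiable two_ne_zero (θ, ζ)
  have hH₁ := hH.differentiable (by norm_num) (θ, ζ)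
  have hHθ := (hH.pdθ (m := 1) (by norm_num)).differentiable one_ne_zero (θ, ζ)
  have hHζ := (hH.pdζ (m := 1) (by norm_num)).differentiable one_ne_zero (θ, ζ)
  have hΦ : HasDerivAt (fun x => energyFluxθ ℓ γ H x ζ)
      ((2 * pdθ H θ ζ * pdθ (pdθ H) θ ζ + 2 * H θ ζ * pdθ H θ ζ -
          Real.pi ^ 2 / ℓ ^ 2 * (2 * pdζ H θ ζ * pdθ (pdζ H) θ ζ)) / 2 +
        γ * (pdθ (laplℓ ℓ H + H) θ ζ * fluxθ ℓ H θ ζ +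
          (laplℓ ℓ H + H) θ ζ * pdθ (fluxθ ℓ H) θ ζ)) θ := by
    have h := ((((hasDerivAt_pdθ hHθ).pow 2).add ((hasDerivAt_pdθ hH₁).pow 2)).sub
      (((hasDerivAt_pdθ hHζ).pow 2).const_mul (Real.pi ^ 2 / ℓ ^ 2))).div_const 2 |>.add
      (((hasDerivAt_pdθ hu).mul (hasDerivAt_pdθ
        ((contDiff_fluxθ (ℓ := ℓ) hH).differentiable one_ne_zero (θ, ζ)))).const_mul γ)
    exact h.congr_deriv (by norm_num)
  have hΨ : HasDerivAt (fun y => energyFluxζ ℓ γ H θ y)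
      (Real.pi ^ 2 / ℓ ^ 2 * (pdζ (pdθ H) θ ζ * pdζ H θ ζ + pdθ H θ ζ * pdζ (pdζ H) θ ζ) +
        γ * (Real.pi / ℓ) * (pdζ (laplℓ ℓ H + H) θ ζ * fluxζ ℓ H θ ζ +
          (laplℓ ℓ H + H) θ ζ * pdζ (fluxζ ℓ H) θ ζ)) ζ :=
    (((hasDerivAt_pdζ hHθ).mul (hasDerivAt_pdζ hHζ)).const_mul _).add
      (((hasDerivAt_pdζ hu).mul (hasDerivAt_pdζ
        ((contDiff_fluxζ (ℓ := ℓ) hH).differentiable one_ne_zero (θ, ζ)))).const_mul _)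
  rw [show pdθ (energyFluxθ ℓ γ H) θ ζ = _ from hΦ.deriv,
    show pdζ (energyFluxζ ℓ γ H) θ ζ = _ from hΨ.deriv, pdζ_pdθ_comm (hH.of_le (by norm_num))]
  simp only [fluxθ, fluxζ, dissipation, laplℓ, Pi.add_apply]
  ring

theorem dissipation_nonneg {θ ζ : ℝ} (hγ : 0 ≤ γ) (hH : 0 ≤ H θ ζ) :
    0 ≤ dissipation ℓ γ H θ ζ := by
  unfold dissipation
  positivity

theorem dissipation_eq_zero_iff {θ ζ : ℝ} (hℓ : ℓ ≠ 0) (hγ : γ ≠ 0) (hH : H θ ζ ≠ 0) :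
    dissipation ℓ γ H θ ζ = 0 ↔
      pdθ (laplℓ ℓ H + H) θ ζ = 0 ∧ pdζ (laplℓ ℓ H + H) θ ζ = 0 := by
  have hc : 0 < Real.pi ^ 2 / ℓ ^ 2 := by positivity
  rw [dissipation, mul_eq_zero, mul_eq_zero, add_eq_zero_iff_of_nonneg (sq_nonneg _)
    (by positivity), mul_eq_zero]
  simp [hγ, hH, hc.ne']

variable {T : ℝ}

theorem DoublyPeriodic.add {f g : ℝ → ℝ → ℝ} (hf : DoublyPeriodic f T)
    (hg : DoublyPeriodic g T) : DoublyPeriodic (f + g) T where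
  left θ ζ := by simp only [Pi.add_apply, hf.left, hg.left]
  right θ ζ := by simp only [Pi.add_apply, hf.right, hg.right]

theorem DoublyPeriodic.energyFluxθ (h : DoublyPeriodic H T) :
    DoublyPeriodic (energyFluxθ ℓ γ H) T := by
  have hu := (h.laplℓ ℓ).add h
  constructor <;> intro θ ζ <;>
    simp only [_root_.energyFluxθ, fluxθ, h.left, h.right, h.pdθ.left, h.pdθ.right, h.pdζ.left,
      h.pdζ.right, hu.left, hu.right, hu.pdθ.left, hu.pdθ.right]

theorem DoublyPeriodic.energyFluxζ (h : DoublyPeriodic H T) :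
    DoublyPeriodic (energyFluxζ ℓ γ H) T := by
  have hu := (h.laplℓ ℓ).add h
  constructor <;> intro θ ζ <;>
    simp only [_root_.energyFluxζ, fluxζ, h.left, h.right, h.pdθ.left, h.pdθ.right, h.pdζ.left,
      h.pdζ.right, hu.left, hu.right, hu.pdζ.left, hu.pdζ.right]

theorem DoublyPeriodic.dissipation (h : DoublyPeriodic H T) :
    DoublyPeriodic (dissipation ℓ γ H) T := by
  have hu := (h.laplℓ ℓ).add h
  constructor <;> intro θ ζ <;>
    simp only [_root_.dissipation, h.left, h.right, hu.pdθ.left, hu.pdθ.right, hu.pdζ.left,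
      hu.pdζ.right]

end RimmingFlow

theorem stmt5 (ℓ γ : ℝ) (hℓ : 0 < ℓ) (hγ : 0 < γ) (H : ℝ → ℝ → ℝ)
    (hreg : ContDiff ℝ 4 (fun p : ℝ × ℝ => H p.1 p.2))
    (hper1 : ∀ θ ζ : ℝ, H (θ + 2 * Real.pi) ζ = H θ ζ)
    (hper2 : ∀ θ ζ : ℝ, H θ (ζ + 2 * Real.pi) = H θ ζ)
    (hpos : ∀ θ ζ : ℝ, 0 < H θ ζ)
    (heq : ∀ θ ζ : ℝ,
      pdθ H θ ζ +
        γ * (pdθ (fun x y => H x y ^ 3 *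
              pdθ (fun x' y' => laplℓ ℓ H x' y' + H x' y') x y) θ ζ +
          Real.pi / ℓ *
            pdζ (fun x y => H x y ^ 3 * (Real.pi / ℓ *
              pdζ (fun x' y' => laplℓ ℓ H x' y' + H x' y') x y)) θ ζ) = 0) :
    ∀ θ ζ : ℝ,
      pdθ (fun x y => laplℓ ℓ H x y + H x y) θ ζ = 0 ∧
      pdζ (fun x y => laplℓ ℓ H x y + H x y) θ ζ = 0 ∧
      pdθ H θ ζ = 0 := by
  have hHT : DoublyPeriodic H (2 * Real.pi) := ⟨hper1, hper2⟩
  have heq' : ∀ θ ζ, pdθ H θ ζ +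
      γ * (pdθ (fluxθ ℓ H) θ ζ + Real.pi / ℓ * pdζ (fluxζ ℓ H) θ ζ) = 0 := heq
  have hdiss : ∀ θ ζ, dissipation ℓ γ H θ ζ = 0 := by
    refine hHT.dissipation.eq_zero_of_integral_integral_eq_zero (by positivity)
      (continuous_dissipation hreg) (fun θ ζ => dissipation_nonneg hγ.le (hpos θ ζ).le) ?_
    simpa only [pdθ_energyFluxθ_add_pdζ_energyFluxζ hreg, heq', mul_zero, zero_add] using
      integral_integral_pdθ_add_pdζ_eq_zero (contDiff_energyFluxθ (ℓ := ℓ) (γ := γ) hreg)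
        (contDiff_energyFluxζ (ℓ := ℓ) (γ := γ) hreg) (fun ζ θ => hHT.energyFluxθ.left θ ζ)
        hHT.energyFluxζ.right
  have hgrad θ ζ := (dissipation_eq_zero_iff hℓ.ne' hγ.ne' (hpos θ ζ).ne').1 (hdiss θ ζ)
  have hfluxθ : fluxθ ℓ H = fun _ _ => 0 := by
    funext θ ζ
    simp [fluxθ, (hgrad θ ζ).1]
  have hfluxζ : fluxζ ℓ H = fun _ _ => 0 := by
    funext θ ζ
    simp [fluxζ, (hgrad θ ζ).2]
  intro θ ζ
  refine ⟨(hgrad θ ζ).1, (hgrad θ ζ).2, ?_⟩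
  simpa [hfluxθ, hfluxζ, pdθ, pdζ] using heq' θ ζ
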